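/- Let λ be a cylindrical l-multipartition of highest weight Λ ∈ P_l^+. Then λ ∈ 𝒴(Λ) if and only if for every k > 0 there is at least one residue r ∈ ℤ/nℤ that does not occur among the colours of the right ends of the length-k rows of λ. -/

import Mathlib

open scoped BigOperators

namespace BF

/-- The fundamental weight `Λ_i`, viewed as the indicator function `ZMod n → ℤ` of `i`. -/
def Lam (n : ℕ) (i : ZMod n) : ZMod n → ℤ := fun j => if j = i then 1 else 0

/-- A weight is dominant if all its coefficients are nonnegative. -/
def Dominant (n : ℕ) (a : ZMod n → ℤ) : Prop := ∀ i, 0 ≤ a i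

/-- The step weight of `e : ZMod n → ℕ`: its `Λ_j`-coefficient is `e (j-1) - e j`. -/
def stepWt (n : ℕ) (e : ZMod n → ℕ) : ZMod n → ℤ := fun j => (e (j - 1) : ℤ) - (e j : ℤ)

/-- Membership in `A_l^+`: `d` is the step weight of some `e : ZMod n → ℕ` of total sum `l`. -/
def InA (n : ℕ) [NeZero n] (l : ℕ) (d : ZMod n → ℤ) : Prop :=
  ∃ e : ZMod n → ℕ, (∑ i, e i) = l ∧ d = stepWt n e

/-- The ground-state path of the weight `Λ`: `p̄_k (i) = Λ (i - k)`,
which is the coefficient form of `p̄_k = Λ_{v₀+k} + ⋯ + Λ_{v_{l-1}+k}`. -/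
def gsp (n : ℕ) (Λ : ZMod n → ℤ) (k : ℕ) : ZMod n → ℤ := fun i => Λ (i - (k : ZMod n))

/-- `p` is a `Λ`-path of level `l`. -/
def IsPath (n : ℕ) [NeZero n] (l : ℕ) (Λ : ZMod n → ℤ) (p : ℕ → ZMod n → ℤ) : Prop :=
  (∀ k, InA n l (fun i => p (k + 1) i - p k i)) ∧ ∃ K, ∀ k ≥ K, p k = gsp n Λ k

/-- The length of a `Λ`-path: least `K` with `p k = p̄ k` for all `k ≥ K`. -/
noncomputable def pathLen (n : ℕ) (Λ : ZMod n → ℤ) (p : ℕ → ZMod n → ℤ) : ℕ :=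
  sInf {K | ∀ k ≥ K, p k = gsp n Λ k}

/-- `f : ℕ → ℕ` is a partition (rows are indexed from `0`). -/
def IsPartitionF (f : ℕ → ℕ) : Prop := (∀ i, f (i + 1) ≤ f i) ∧ ∃ N, ∀ i ≥ N, f i = 0

/-- An `l`-multipartition. -/
def IsMP (l : ℕ) (lam : Fin l → ℕ → ℕ) : Prop := ∀ j, IsPartitionF (lam j)

/-- The data `v : Fin l → ℕ` of a decomposition `Λ = Λ_{v 0} + ⋯ + Λ_{v (l-1)}`
with `0 ≤ v 0 ≤ ⋯ ≤ v (l-1) < n`. -/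
def SortedV (n l : ℕ) (v : Fin l → ℕ) : Prop := Monotone v ∧ ∀ j, v j < n

/-- The weight `Λ = Λ_{v 0} + ⋯ + Λ_{v (l-1)}` determined by `v`. -/
def wtOf (n : ℕ) {l : ℕ} (v : Fin l → ℕ) : ZMod n → ℤ :=
  fun i => ((Finset.univ.filter fun j : Fin l => ((v j : ZMod n) = i)).card : ℤ)

/-- The colour of the node in (0-based) row `i`, (1-based) column `c` of component `j`:
`(c - (i+1) + v j) mod n`. -/
def colour (n : ℕ) {l : ℕ} (v : Fin l → ℕ) (j : Fin l) (i c : ℕ) : ZMod n :=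
  (c : ZMod n) - (i : ZMod n) - 1 + (v j : ZMod n)

/-- `N^r(λ)`: the total number of nodes of colour `r` in the multipartition `λ`. -/
noncomputable def Ncolour (n : ℕ) {l : ℕ} (v : Fin l → ℕ) (lam : Fin l → ℕ → ℕ)
    (r : ZMod n) : ℕ :=
  Nat.card {x : Fin l × ℕ × ℕ //
    1 ≤ x.2.2 ∧ x.2.2 ≤ lam x.1 x.2.1 ∧ colour n v x.1 x.2.1 x.2.2 = r}

/-- The height `f′_m` of the `m`-th column of the partition `f`. -/
noncomputable def colHt (f : ℕ → ℕ) (m : ℕ) : ℕ := Nat.card {i : ℕ // m ≤ f i}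

/-- The function `e` whose step weight is the `k`-th step of `π(λ)`:
`e i = #{j : v j + k - λ^{(j)′}_{k+1} ≡ i mod n}`. -/
noncomputable def eFun (n : ℕ) {l : ℕ} (v : Fin l → ℕ) (lam : Fin l → ℕ → ℕ) (k : ℕ) :
    ZMod n → ℕ :=
  fun i => Nat.card {j : Fin l //
    (v j : ZMod n) + (k : ZMod n) - (colHt (lam j) (k + 1) : ZMod n) = i}

/-- `p = π(λ)` where `λ` is an `l`-multipartition of highest weight `wtOf n v`. -/
def IsPi (n : ℕ) {l : ℕ} (v : Fin l → ℕ) (lam : Fin l → ℕ → ℕ)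
    (p : ℕ → ZMod n → ℤ) : Prop :=
  (∀ k, (fun i => p (k + 1) i - p k i) = stepWt n (eFun n v lam k)) ∧
  ∃ K, ∀ k ≥ K, p k = gsp n (wtOf n v) k

/-- `λ` is cylindrical of highest weight `Λ = wtOf n v`. -/
def Cylindrical (n : ℕ) {l : ℕ} (v : Fin l → ℕ) (lam : Fin l → ℕ → ℕ) : Prop :=
  (∀ (j : ℕ) (hj : j + 1 < l) (i : ℕ),
      lam ⟨j + 1, hj⟩ (i + (v ⟨j + 1, hj⟩ - v ⟨j, Nat.lt_of_succ_lt hj⟩)) ≤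
        lam ⟨j, Nat.lt_of_succ_lt hj⟩ i) ∧
  ∀ (hl : 0 < l) (i : ℕ),
      lam ⟨0, hl⟩ (i + (n + v ⟨0, hl⟩ - v ⟨l - 1, Nat.sub_lt hl Nat.one_pos⟩)) ≤
        lam ⟨l - 1, Nat.sub_lt hl Nat.one_pos⟩ i

/-- `λ` is higher than `μ`: every column of each component of `λ` is at most as high as
the corresponding column of `μ`. -/
def Higher {l : ℕ} (lam mu : Fin l → ℕ → ℕ) : Prop :=
  ∀ (j : Fin l) (k : ℕ), 1 ≤ k → colHt (lam j) k ≤ colHt (mu j) k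

/-- `λ` is the highest-lift of the path `p`: it is a cylindrical multipartition with
`π(λ) = p` which is higher than every cylindrical multipartition mapping to `p`. -/
def IsHL (n : ℕ) {l : ℕ} (v : Fin l → ℕ) (lam : Fin l → ℕ → ℕ)
    (p : ℕ → ZMod n → ℤ) : Prop :=
  IsMP l lam ∧ Cylindrical n v lam ∧ IsPi n v lam p ∧
    ∀ mu : Fin l → ℕ → ℕ, IsMP l mu → Cylindrical n v mu → IsPi n v mu p → Higher lam mu

/-- `λ ∈ 𝒴(Λ)` with `Λ = wtOf n v`. -/
def InY (n : ℕ) {l : ℕ} (v : Fin l → ℕ) (lam : Fin l → ℕ → ℕ) : Prop :=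
  ∃ p, IsHL n v lam p

/-- `α′_r = -Λ_{r-1} + 2Λ_r - Λ_{r+1}`. -/
def alphaP (n : ℕ) (r : ZMod n) : ZMod n → ℤ :=
  fun i => -(Lam n (r - 1) i) + 2 * Lam n r i - Lam n (r + 1) i

/-- `ψ_r(k)`: the number of length-`k` rows of `λ` whose right end has colour `r`. -/
noncomputable def psiCount (n : ℕ) {l : ℕ} (v : Fin l → ℕ) (lam : Fin l → ℕ → ℕ)
    (k : ℕ) (r : ZMod n) : ℕ :=
  Nat.card {x : Fin l × ℕ // lam x.1 x.2 = k ∧ colour n v x.1 x.2 k = r}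

/-- The number of length-`k` rows of `λ` whose left end has colour `r`. -/
noncomputable def leftCount (n : ℕ) {l : ℕ} (v : Fin l → ℕ) (lam : Fin l → ℕ → ℕ)
    (k : ℕ) (r : ZMod n) : ℕ :=
  Nat.card {x : Fin l × ℕ // lam x.1 x.2 = k ∧ colour n v x.1 x.2 1 = r}

/-- The total number of length-`k` rows of `λ`. -/
noncomputable def rowCount {l : ℕ} (lam : Fin l → ℕ → ℕ) (k : ℕ) : ℕ :=
  Nat.card {x : Fin l × ℕ // lam x.1 x.2 = k}

/-- `m_r(k)`: the number of `r`-nodes of `λ` in column `k` or to its right. -/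
noncomputable def mCount (n : ℕ) {l : ℕ} (v : Fin l → ℕ) (lam : Fin l → ℕ → ℕ)
    (k : ℕ) (r : ZMod n) : ℕ :=
  Nat.card {x : Fin l × ℕ × ℕ //
    k ≤ x.2.2 ∧ x.2.2 ≤ lam x.1 x.2.1 ∧ colour n v x.1 x.2.1 x.2.2 = r}

/-- `p` is a `(Λ′,Λ″)`-restricted path, where `l''` is the level of `Λ″`:
`p - Λ′ ∈ 𝒫(Λ″)` and `p_k - η̂_k` is dominant for all `k`. -/
def IsRes (n : ℕ) [NeZero n] (l'' : ℕ) (L' L'' : ZMod n → ℤ) (p : ℕ → ZMod n → ℤ) : Prop :=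
  IsPath n l'' L'' (fun k i => p k i - L' i) ∧
  ∀ k, ∃ e : ZMod n → ℕ, (∑ i, e i) = l'' ∧
    (fun i => p (k + 1) i - p k i) = stepWt n e ∧ ∀ i, (e i : ℤ) ≤ p k i

/-- The length of a restricted path: `ℓ(p) = ℓ(p - Λ′)`. -/
noncomputable def resLen (n : ℕ) (L' L'' : ZMod n → ℤ) (p : ℕ → ZMod n → ℤ) : ℕ :=
  sInf {K | ∀ k ≥ K, (fun i => p k i - L' i) = gsp n L'' k}

/-- `♯Λ`. -/
def sharpWt (n : ℕ) (Λ : ZMod n → ℤ) : ZMod n → ℤ := fun i => Λ (-i)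

/-- `♯p`: `(♯p)_k (i) = a_{k-i}(k)` where `p_k = ∑ a_i(k) Λ_i`. -/
def sharpPath (n : ℕ) (p : ℕ → ZMod n → ℤ) : ℕ → ZMod n → ℤ :=
  fun k i => p k ((k : ZMod n) - i)

/-- `θ(a) = 1` if `a ≥ 0`, `0` otherwise. -/
def theta (a : ℤ) : ℕ := if 0 ≤ a then 1 else 0

/-- The function counting the entries of `μ : Fin l → ℕ` in each class mod `n`. -/
def cntF (n : ℕ) {l : ℕ} (μ : Fin l → ℕ) : ZMod n → ℕ :=
  fun i => (Finset.univ.filter fun j : Fin l => ((μ j : ZMod n) = i)).card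

/-- The energy function `H` on `A_l^+ × A_l^+`:
`H(α,β) = min_{σ ∈ S_l} ∑_j θ(μ_j - ν_{σ(j)})` where `α`, `β` are the step weights of
`Λ_{μ_0} + ⋯ + Λ_{μ_{l-1}}`, `Λ_{ν_0} + ⋯ + Λ_{ν_{l-1}}` with `0 ≤ μ_j, ν_j < n`. -/
noncomputable def Hfun (n : ℕ) (l : ℕ) (d d' : ZMod n → ℤ) : ℕ :=
  sInf {m | ∃ μ ν : Fin l → ℕ, (∀ j, μ j < n) ∧ (∀ j, ν j < n) ∧
    d = stepWt n (cntF n μ) ∧ d' = stepWt n (cntF n ν) ∧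
    m = Finset.univ.inf' ⟨1, Finset.mem_univ 1⟩
      fun σ : Equiv.Perm (Fin l) => ∑ j, theta ((μ j : ℤ) - (ν (σ j) : ℤ))}

/-- `(j, i)` is a removable `r`-node of `λ` (node at the right end of 0-based row `i`
of component `j`). -/
def RemNode (n : ℕ) {l : ℕ} (v : Fin l → ℕ) (lam : Fin l → ℕ → ℕ) (r : ZMod n)
    (j : Fin l) (i : ℕ) : Prop :=
  1 ≤ lam j i ∧ lam j (i + 1) < lam j i ∧ colour n v j i (lam j i) = r

/-- `(j, i)` is an addable `r`-node of `λ` (node addable at the end of 0-based row `i`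
of component `j`). -/
def AddNode (n : ℕ) {l : ℕ} (v : Fin l → ℕ) (lam : Fin l → ℕ → ℕ) (r : ZMod n)
    (j : Fin l) (i : ℕ) : Prop :=
  (i = 0 ∨ lam j i < lam j (i - 1)) ∧ colour n v j i (lam j i + 1) = r

/-- The diagonal number `d = c - (i+1) + v j` of the addable/removable node
`x = (j, i, isRemovable)`. -/
def nodeD {l : ℕ} (v : Fin l → ℕ) (lam : Fin l → ℕ → ℕ) (x : Fin l × ℕ × Bool) : ℤ :=
  (if x.2.2 then (lam x.1 x.2.1 : ℤ) else (lam x.1 x.2.1 : ℤ) + 1) - ((x.2.1 : ℤ) + 1) + (v x.1 : ℤ)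

/-- The total order on addable/removable nodes: `(d,j) < (d',j')` iff `d < d'`, or
`d = d'` and `j > j'`. -/
def nodeLT {l : ℕ} (v : Fin l → ℕ) (lam : Fin l → ℕ → ℕ) (x y : Fin l × ℕ × Bool) : Prop :=
  nodeD v lam x < nodeD v lam y ∨ (nodeD v lam x = nodeD v lam y ∧ (y.1 : ℕ) < (x.1 : ℕ))

/-- `L` is the `r`-signature of `λ`: the increasing list of all addable and removable
`r`-nodes (flag `true` = removable, `false` = addable). -/
def IsSig (n : ℕ) {l : ℕ} (v : Fin l → ℕ) (lam : Fin l → ℕ → ℕ) (r : ZMod n)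
    (L : List (Fin l × ℕ × Bool)) : Prop :=
  L.Pairwise (nodeLT v lam) ∧
  ∀ x : Fin l × ℕ × Bool, x ∈ L ↔
    ((x.2.2 = true ∧ RemNode n v lam r x.1 x.2.1) ∨
      (x.2.2 = false ∧ AddNode n v lam r x.1 x.2.1))

/-- One step of the reduction procedure on signature words: delete an adjacent pair
consisting of a removable node (`true`) immediately followed by an addable node (`false`). -/
inductive SigStep : List Bool → List Bool → Prop
  | pair (l₁ l₂ : List Bool) : SigStep (l₁ ++ true :: false :: l₂) (l₁ ++ l₂)


section Core
variable {n l : ℕ}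

/-- floor-difference identity -/
lemma floorDiff {n : ℕ} (hn : 0 < n) (x d : ℤ) (h0 : 0 ≤ d) (h1 : d ≤ n) :
    x / n - (x - d) / n = if x % n < d then 1 else 0 := by
  have hn' : (0:ℤ) < n := by exact_mod_cast hn
  have hx := Int.mul_ediv_add_emod x n
  set q := x / (n:ℤ) with hq
  set r := x % (n:ℤ) with hr
  have hr0 : 0 ≤ r := Int.emod_nonneg x (by positivity)
  have hrn : r < n := Int.emod_lt_of_pos x hn'
  by_cases hcase : r < d
  · have : (x - d) / n = q - 1 := by
      have : x - d = (r - d + n) + (q - 1) * n := by linarith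
      rw [this, Int.add_mul_ediv_right _ _ (by positivity : (n:ℤ) ≠ 0)]
      have : (r - d + n) / n = 0 := Int.ediv_eq_zero_of_lt (by linarith) (by linarith)
      omega
    simp [hcase, this]
  · have : (x - d) / n = q := by
      have : x - d = (r - d) + q * n := by linarith
      rw [this, Int.add_mul_ediv_right _ _ (by positivity : (n:ℤ) ≠ 0)]
      have : (r - d) / n = 0 := Int.ediv_eq_zero_of_lt (by omega) (by omega)
      omega
    simp [hcase, this]

/-- pairwise-window condition -/
structure Win (n l : ℕ) (x : Fin l → ℤ) : Prop where
  mono : Monotone x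
  wrap : ∀ j j' : Fin l, x j ≤ x j' + n

noncomputable def extS (n l : ℕ) (x : Fin l → ℤ) (t : ℤ) : ℤ :=
  if h : 0 < l then
    x ⟨(t % (l:ℤ)).toNat, by
      have h0 : (0:ℤ) < l := by exact_mod_cast h
      have h1 := Int.emod_nonneg t (by positivity : (l:ℤ) ≠ 0)
      have h2 := Int.emod_lt_of_pos t h0
      omega⟩ + n * (t / l)
  else 0

lemma extS_eq (hl : 0 < l) (x : Fin l → ℤ) (j : Fin l) (m : ℤ) :
    extS n l x ((j : ℤ) + l * m) = x j + n * m := by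
  have hl' : (0:ℤ) < l := by exact_mod_cast hl
  have hmod : ((j : ℤ) + l * m) % l = (j : ℤ) := by
    rw [Int.add_mul_emod_self_left, Int.emod_eq_of_lt (by positivity) (by exact_mod_cast j.isLt)]
  have hdiv : ((j : ℤ) + l * m) / l = m := by
    rw [mul_comm, Int.add_mul_ediv_right _ _ (by positivity : (l:ℤ) ≠ 0),
      Int.ediv_eq_zero_of_lt (by positivity) (by exact_mod_cast j.isLt)]
    ring
  rw [extS, dif_pos hl]
  congr 1
  · congr 1
    apply Fin.ext
    simp [hmod]
  · rw [hdiv]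

lemma extS_decomp (hl : 0 < l) (t : ℤ) :
    ∃ (j : Fin l) (m : ℤ), t = (j : ℤ) + l * m := by
  have hl' : (0:ℤ) < l := by exact_mod_cast hl
  refine ⟨⟨(t % l).toNat, ?_⟩, t / l, ?_⟩
  · have h1 := Int.emod_nonneg t (by positivity : (l:ℤ) ≠ 0)
    have h2 := Int.emod_lt_of_pos t hl'
    omega
  · have h1 := Int.emod_nonneg t (by positivity : (l:ℤ) ≠ 0)
    have := Int.mul_ediv_add_emod t l
    simp only []
    push_cast
    omega

lemma extS_fin (hl : 0 < l) (x : Fin l → ℤ) (j : Fin l) : extS n l x (j : ℤ) = x j := by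
  have := extS_eq (n := n) hl x j 0
  simpa using this

lemma extS_mono (hl : 0 < l) {x : Fin l → ℤ} (hx : Win n l x) : Monotone (extS n l x) := by
  apply monotone_int_of_le_succ
  intro t
  obtain ⟨j, m, rfl⟩ := extS_decomp hl t
  rcases lt_or_eq_of_le (Nat.succ_le_of_lt j.isLt) with h | h
  · have : ((j:ℤ) + l * m) + 1 = ((⟨j.val + 1, h⟩ : Fin l) : ℤ) + l * m := by
      push_cast; ring
    rw [extS_eq hl x j m, this, extS_eq hl x _ m]
    have := hx.mono (show j ≤ ⟨j.val+1, h⟩ by simp [Fin.le_def])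
    omega
  · -- j = l - 1
    have : ((j:ℤ) + l * m) + 1 = ((⟨0, hl⟩ : Fin l) : ℤ) + l * (m+1) := by
      have : (j : ℤ) = (l : ℤ) - 1 := by
        have : (j.val : ℤ) + 1 = l := by exact_mod_cast congrArg Nat.cast h
        omega
      rw [this]; push_cast; ring
    rw [extS_eq hl x j m, this, extS_eq hl x _ (m+1)]
    have hw := hx.wrap j ⟨0, hl⟩
    have e1 : (n:ℤ) * (m+1) = n*m + n := by ring
    linarith

lemma extS_cast (hl : 0 < l) [NeZero n] (x : Fin l → ℤ) (j : Fin l) (m : ℤ) :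
    ((extS n l x ((j:ℤ) + l * m) : ℤ) : ZMod n) = ((x j : ℤ) : ZMod n) := by
  rw [extS_eq hl x j m]
  push_cast
  simp


noncomputable def PhiF (n l : ℕ) (x : Fin l → ℤ) (w : ℤ) : ℤ :=
  (l : ℤ) - 1 + ∑ j : Fin l, (w - x j) / n

lemma PhiF_mono (hn : 0 < n) (x : Fin l → ℤ) : Monotone (PhiF n l x) := by
  intro a b hab
  unfold PhiF
  have h : ∀ j ∈ Finset.univ, (a - x j) / (n:ℤ) ≤ (b - x j) / (n:ℤ) := fun j _ =>
    Int.ediv_le_ediv (by exact_mod_cast hn) (by omega)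
  have := Finset.sum_le_sum h
  omega

lemma PhiF_shift (hn : 0 < n) (x : Fin l → ℤ) (w : ℤ) (m : ℤ) :
    PhiF n l x (w + n * m) = PhiF n l x w + l * m := by
  unfold PhiF
  have h : ∀ j : Fin l, (w + n * m - x j) / n = (w - x j) / n + m := by
    intro j
    rw [show w + n * m - x j = (w - x j) + m * n by ring,
      Int.add_mul_ediv_right _ _ (by positivity : (n:ℤ) ≠ 0)]
  rw [Finset.sum_congr rfl (fun j _ => h j), Finset.sum_add_distrib]
  simp only [Finset.sum_const, Finset.card_univ, Fintype.card_fin, smul_eq_mul]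
  ring

lemma PhiF_ge (hn : 0 < n) {x : Fin l → ℤ} (hx : Win n l x) (j : Fin l) :
    (j : ℤ) ≤ PhiF n l x (x j) := by
  unfold PhiF
  have hterm : ∀ j' ∈ Finset.univ, (if j' ≤ j then (0:ℤ) else -1) ≤ (x j - x j') / (n:ℤ) := by
    intro j' _
    by_cases h : j' ≤ j
    · simp only [h, if_true]
      have := hx.mono h
      exact Int.ediv_nonneg (by omega) (by positivity)
    · simp only [h, if_false]
      have hw := hx.wrap j' j
      have hepr : ((-1 : ℤ) * n) / n = -1 := Int.mul_ediv_cancel _ (by positivity)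
      calc (-1 : ℤ) = ((-1 : ℤ) * n) / n := hepr.symm
        _ ≤ (x j - x j') / n := Int.ediv_le_ediv (by exact_mod_cast hn) (by omega)
  have hsum := Finset.sum_le_sum hterm
  have hval : (∑ j' : Fin l, if j' ≤ j then (0:ℤ) else -1) = (j:ℤ) + 1 - l := by
    rw [Finset.sum_ite]
    simp only [Finset.sum_const, smul_eq_mul, smul_zero, nsmul_eq_mul, mul_zero, mul_neg,
      mul_one, zero_add, add_zero]
    have h1 : (Finset.filter (fun j' : Fin l => ¬ j' ≤ j) Finset.univ).card
        = l - ((j:ℕ) + 1) := by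
      have he : (Finset.filter (fun j' : Fin l => ¬ j' ≤ j) Finset.univ)
          = (Finset.filter (fun j' : Fin l => j' ≤ j) Finset.univ)ᶜ := by
        ext j'; simp
      rw [he, Finset.card_compl]
      have he2 : (Finset.filter (fun j' : Fin l => j' ≤ j) Finset.univ) = Finset.Iic j := by
        ext j'; simp
      rw [he2, Fin.card_Iic]
      simp [Fintype.card_fin]
    rw [h1]
    have hle : (j:ℕ) + 1 ≤ l := j.isLt
    push_cast
    omega
  omega

lemma PhiF_le (hn : 0 < n) {x : Fin l → ℤ} (hx : Win n l x) (j : Fin l) :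
    PhiF n l x (x j - 1) ≤ (j : ℤ) - 1 := by
  unfold PhiF
  have hterm : ∀ j' ∈ Finset.univ, (x j - 1 - x j') / (n:ℤ) ≤ (if j ≤ j' then (-1:ℤ) else 0) := by
    intro j' _
    by_cases h : j ≤ j'
    · simp only [h, if_true]
      have := hx.mono h
      have : (x j - 1 - x j') / (n:ℤ) < 0 := Int.ediv_neg_of_neg_of_pos (by omega) (by exact_mod_cast hn)
      omega
    · simp only [h, if_false]
      have hw := hx.wrap j j'
      have h2 : (x j - 1 - x j') / (n:ℤ) ≤ ((n:ℤ) - 1) / n :=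
        Int.ediv_le_ediv (by exact_mod_cast hn) (by omega)
      have h3 : ((n:ℤ) - 1) / n = 0 := Int.ediv_eq_zero_of_lt (by omega) (by omega)
      omega
  have hsum := Finset.sum_le_sum hterm
  have hval : (∑ j' : Fin l, if j ≤ j' then (-1:ℤ) else 0) = (j:ℤ) - l := by
    rw [Finset.sum_ite]
    simp only [Finset.sum_const, smul_eq_mul, smul_zero, nsmul_eq_mul, mul_zero, mul_neg,
      mul_one, zero_add, add_zero]
    have he2 : (Finset.filter (fun j' : Fin l => j ≤ j') Finset.univ) = Finset.Ici j := by
      ext j'; simp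
    rw [he2, Fin.card_Ici]
    have hle : (j:ℕ) ≤ l := le_of_lt j.isLt
    push_cast
    omega
  omega

lemma PhiF_ge' (hn : 0 < n) (hl : 0 < l) {x : Fin l → ℤ} (hx : Win n l x) (t : ℤ) :
    t ≤ PhiF n l x (extS n l x t) := by
  obtain ⟨j, m, rfl⟩ := extS_decomp hl t
  rw [extS_eq hl x j m, PhiF_shift hn]
  have := PhiF_ge hn hx j
  omega

lemma PhiF_le' (hn : 0 < n) (hl : 0 < l) {x : Fin l → ℤ} (hx : Win n l x) (t : ℤ) :
    PhiF n l x (extS n l x t - 1) ≤ t - 1 := by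
  obtain ⟨j, m, rfl⟩ := extS_decomp hl t
  rw [extS_eq hl x j m, show x j + n * m - 1 = (x j - 1) + n * m by ring, PhiF_shift hn]
  have := PhiF_le hn hx j
  omega

/-- key characterization: `t ≤ Φ_x w ↔ x̂ t ≤ w` -/
lemma PhiF_charact (hn : 0 < n) (hl : 0 < l) {x : Fin l → ℤ} (hx : Win n l x) (t w : ℤ) :
    t ≤ PhiF n l x w ↔ extS n l x t ≤ w := by
  constructor
  · intro h
    by_contra hc
    push_neg at hc
    have h1 : w ≤ extS n l x t - 1 := by omega
    have := (PhiF_mono hn x h1).trans (PhiF_le' hn hl hx t)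
    omega
  · intro h
    exact (PhiF_ge' hn hl hx t).trans (PhiF_mono hn x h)

def Rcnt (n l : ℕ) (x : Fin l → ℤ) (s : ZMod n) : ℕ :=
  (Finset.univ.filter fun j : Fin l => ((x j : ℤ) : ZMod n) = s).card

lemma sum_res_factor [NeZero n] (x : Fin l → ℤ) (F : ZMod n → ℤ) :
    ∑ j : Fin l, F ((x j : ℤ) : ZMod n) = ∑ s : ZMod n, (Rcnt n l x s : ℤ) * F s := by
  rw [← Finset.sum_fiberwise Finset.univ (fun j : Fin l => ((x j : ℤ) : ZMod n))
    (fun j => F ((x j : ℤ) : ZMod n))]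
  apply Finset.sum_congr rfl
  intro s _
  rw [Finset.sum_congr rfl (fun j hj => by
    rw [(Finset.mem_filter.mp hj).2] : ∀ j ∈ _, F ((x j : ℤ) : ZMod n) = F s)]
  simp [Rcnt, mul_comm]

lemma PhiF_count [NeZero n] (hn : 0 < n) (x : Fin l → ℤ) {a b : ℤ}
    (hab : a ≤ b) (hban : b ≤ a + n) :
    PhiF n l x b - PhiF n l x a
      = ∑ j : Fin l, (if ((((b : ZMod n) - ((x j : ℤ) : ZMod n)).val : ℤ) < b - a)
        then (1:ℤ) else 0) := by
  have key : ∀ j : Fin l, (b - x j) / (n:ℤ) - (a - x j) / n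
      = if ((((b : ZMod n) - ((x j : ℤ) : ZMod n)).val : ℤ) < b - a) then (1:ℤ) else 0 := by
    intro j
    have h1 := floorDiff hn (b - x j) (b - a) (by omega) (by omega)
    rw [show b - x j - (b - a) = a - x j by ring] at h1
    rw [h1]
    congr 1
    have h2 : ((((b - x j : ℤ)) : ZMod n)).val = ((b - x j) % n : ℤ) := by
      exact_mod_cast ZMod.val_intCast (n := n) (b - x j)
    have h3 : (((b - x j : ℤ)) : ZMod n) = (b : ZMod n) - ((x j : ℤ) : ZMod n) := by
      push_cast; ring
    rw [← h3]
    simp only [eq_iff_iff]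
    constructor
    · intro h; omega
    · intro h; omega
  unfold PhiF
  rw [← Finset.sum_congr rfl (fun j _ => key j), Finset.sum_sub_distrib]
  ring

lemma PhiF_diff_eq [NeZero n] (hn : 0 < n) {x x' : Fin l → ℤ}
    (hres : ∀ s, Rcnt n l x s = Rcnt n l x' s) {a b : ℤ} (hab : a ≤ b) (hban : b ≤ a + n) :
    PhiF n l x b - PhiF n l x a = PhiF n l x' b - PhiF n l x' a := by
  rw [PhiF_count hn x hab hban, PhiF_count hn x' hab hban]
  exact (sum_res_factor (n := n) x
      (fun s => if ((((b : ZMod n) - s).val : ℤ) < b - a) then (1:ℤ) else 0)).trans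
    (((Finset.sum_congr rfl (fun s _ => by rw [hres s]))).trans
      (sum_res_factor (n := n) x'
        (fun s => if ((((b : ZMod n) - s).val : ℤ) < b - a) then (1:ℤ) else 0)).symm)

lemma extS_shift (hl : 0 < l) (x : Fin l → ℤ) (t : ℤ) :
    extS n l x (t + l) = extS n l x t + n := by
  obtain ⟨j, m, rfl⟩ := extS_decomp hl t
  rw [show (j:ℤ) + l * m + l = (j:ℤ) + l * (m + 1) by ring, extS_eq hl x j (m+1),
    extS_eq hl x j m]
  ring

lemma extS_le (hl : 0 < l) {x y : Fin l → ℤ} (h : ∀ j, x j ≤ y j) (t : ℤ) :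
    extS n l x t ≤ extS n l y t := by
  obtain ⟨j, m, rfl⟩ := extS_decomp hl t
  rw [extS_eq hl x j m, extS_eq hl y j m]
  have := h j
  omega

/-- Claim A: gap at a residue implies maximality. -/
lemma claimA [NeZero n] (hn : 0 < n) (hl : 0 < l)
    {x y x' : Fin l → ℤ} (hx : Win n l x) (hx' : Win n l x')
    (hxy : ∀ j, x j ≤ y j) (hx'y : ∀ j, x' j ≤ y j)
    (hres : ∀ s, Rcnt n l x s = Rcnt n l x' s)
    (hgap : ∃ r : ZMod n, ∀ (j : Fin l) (m : ℤ), ((m : ZMod n) = r) → ¬(x j ≤ m ∧ m < y j)) :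
    ∀ j, x' j ≤ x j := by
  obtain ⟨r, hgap⟩ := hgap
  have gapZ : ∀ (t m : ℤ), ((m : ZMod n) = r) → ¬(extS n l x t ≤ m ∧ m < extS n l y t) := by
    intro t m hm hc
    obtain ⟨j, q, rfl⟩ := extS_decomp hl t
    rw [extS_eq hl x j q] at hc
    rw [extS_eq hl y j q] at hc
    refine hgap j (m - n * q) ?_ ⟨by omega, by omega⟩
    push_cast
    simp [hm]
  by_contra hc
  push_neg at hc
  obtain ⟨j₀, hj₀⟩ := hc
  set t : ℤ := (j₀ : ℤ) with ht
  have hft : extS n l x t = x j₀ := extS_fin hl x j₀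
  have hft' : extS n l x' t = x' j₀ := extS_fin hl x' j₀
  -- w : least element of class r that is ≥ x j₀
  set w : ℤ := x j₀ + ((r - ((x j₀ : ℤ) : ZMod n)).val : ℤ) with hw
  have hvnn : (0:ℤ) ≤ ((r - ((x j₀ : ℤ) : ZMod n)).val : ℤ) := Int.natCast_nonneg _
  have hvlt : ((r - ((x j₀ : ℤ) : ZMod n)).val : ℤ) < n := by
    exact_mod_cast ZMod.val_lt _
  have hwr : (w : ZMod n) = r := by
    rw [hw]
    push_cast
    rw [ZMod.natCast_rightInverse (r - ((x j₀ : ℤ) : ZMod n))]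
    ring
  have hwlb : x j₀ ≤ w := by omega
  have hwub : w < x j₀ + n := by omega
  -- y j₀ ≤ w from the gap at j₀
  have hyj₀ : y j₀ ≤ w := by
    by_contra hcon
    exact hgap j₀ w hwr ⟨hwlb, by omega⟩
  set B : ℤ := PhiF n l x w with hB
  have hfB : extS n l x B ≤ w := (PhiF_charact hn hl hx B w).mp (le_refl B)
  have htB : t ≤ B := (PhiF_charact hn hl hx t w).mpr (by omega)
  have hfBlow : w - n < extS n l x B := by
    by_contra hcon
    push_neg at hcon
    have : extS n l x (B + l) ≤ w := by
      rw [extS_shift hl]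
      omega
    have := (PhiF_charact hn hl hx (B + l) w).mpr this
    omega
  -- the least class-r element above f B is again w
  have hyB : extS n l y B ≤ w := by
    by_contra hcon
    exact gapZ B w hwr ⟨hfB, by omega⟩
  have hf'B : extS n l x' B ≤ w := (extS_le hl hx'y B).trans hyB
  have hBle : B ≤ PhiF n l x' w := (PhiF_charact hn hl hx' B w).mpr hf'B
  -- counting on the interval [x' j₀ - 1, w]
  set a : ℤ := x' j₀ - 1 with ha
  have hax : x j₀ ≤ a := by omega
  have haw : a < w := by
    have : x' j₀ ≤ y j₀ := hx'y j₀
    omega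
  have hcount := PhiF_diff_eq (l := l) hn hres (a := a) (b := w) (by omega) (by omega)
  have h1 : t ≤ PhiF n l x a := (PhiF_charact hn hl hx t a).mpr (by omega)
  have h2 : PhiF n l x' a < t := by
    by_contra hcon
    push_neg at hcon
    have := (PhiF_charact hn hl hx' t a).mp hcon
    omega
  omega

lemma PhiF_le_PhiF (hn : 0 < n) {x x' : Fin l → ℤ} (h : ∀ j, x j ≤ x' j) (w : ℤ) :
    PhiF n l x' w ≤ PhiF n l x w := by
  unfold PhiF
  have h2 : ∀ j ∈ Finset.univ, (w - x' j) / (n:ℤ) ≤ (w - x j) / n := fun j _ =>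
    Int.ediv_le_ediv (by exact_mod_cast hn) (by have := h j; omega)
  have := Finset.sum_le_sum h2
  omega

noncomputable def zfull (n l : ℕ) (x' : Fin l → ℤ) (t : ℤ) : ℤ :=
  sInf {w : ℤ | t ≤ PhiF n l x' w}

lemma zfull_set_ne (hn : 0 < n) (hl : 0 < l) (x' : Fin l → ℤ) (t : ℤ) :
    Set.Nonempty {w : ℤ | t ≤ PhiF n l x' w} := by
  set m : ℤ := max (t - PhiF n l x' 0) 0 with hm
  refine ⟨n * m, ?_⟩
  have h1 : (0:ℤ) + n * m = n * m := by ring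
  have h2 := PhiF_shift (l := l) hn x' 0 m
  rw [h1] at h2
  simp only [Set.mem_setOf_eq, h2]
  have hl1 : (1:ℤ) ≤ l := by exact_mod_cast hl
  have hmnn : 0 ≤ m := le_max_right _ _
  nlinarith [le_max_left (t - PhiF n l x' 0) 0]

lemma zfull_set_bdd (hn : 0 < n) (hl : 0 < l) (x' : Fin l → ℤ) (t : ℤ) :
    BddBelow {w : ℤ | t ≤ PhiF n l x' w} := by
  set m : ℤ := max (PhiF n l x' 0 - t + 1) 0 with hm
  refine ⟨-(n * m), ?_⟩
  intro w hw
  simp only [Set.mem_setOf_eq] at hw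
  by_contra hc
  push_neg at hc
  have h2 := PhiF_shift (l := l) hn x' 0 (-m)
  rw [show (0:ℤ) + n * (-m) = -(n*m) by ring] at h2
  have h3 : PhiF n l x' w ≤ PhiF n l x' (-(n*m)) := PhiF_mono hn x' (le_of_lt hc)
  have hl1 : (1:ℤ) ≤ l := by exact_mod_cast hl
  have hmnn : 0 ≤ m := le_max_right _ _
  nlinarith [le_max_left (PhiF n l x' 0 - t + 1) 0]

lemma zfull_charact (hn : 0 < n) (hl : 0 < l) (x' : Fin l → ℤ) (t : ℤ) (w : ℤ) :
    zfull n l x' t ≤ w ↔ t ≤ PhiF n l x' w := by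
  constructor
  · intro h
    have hmem := Int.csInf_mem (zfull_set_ne hn hl x' t) (zfull_set_bdd hn hl x' t)
    exact le_trans hmem (PhiF_mono hn x' h)
  · intro h
    exact csInf_le (zfull_set_bdd hn hl x' t) h

lemma zfull_self (hn : 0 < n) (hl : 0 < l) (x' : Fin l → ℤ) (t : ℤ) :
    t ≤ PhiF n l x' (zfull n l x' t) :=
  (zfull_charact hn hl x' t _).mp (le_refl _)

lemma zfull_mono (hn : 0 < n) (hl : 0 < l) (x' : Fin l → ℤ) : Monotone (zfull n l x') := by
  intro t t' h
  rw [zfull_charact hn hl]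
  exact le_trans h (zfull_self hn hl x' t')

lemma zfull_shift (hn : 0 < n) (hl : 0 < l) (x' : Fin l → ℤ) (t m : ℤ) :
    zfull n l x' (t + l * m) = zfull n l x' t + n * m := by
  have hA : zfull n l x' (t + l * m) ≤ zfull n l x' t + n * m := by
    rw [zfull_charact hn hl, PhiF_shift hn]
    have := zfull_self hn hl x' t
    omega
  have hB : zfull n l x' t ≤ zfull n l x' (t + l * m) - n * m := by
    rw [zfull_charact hn hl, show zfull n l x' (t + l*m) - n*m = zfull n l x' (t + l*m) + n * (-m) by ring,
      PhiF_shift hn]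
    have := zfull_self hn hl x' (t + l * m)
    have hr : (l:ℤ) * (-m) = -((l:ℤ) * m) := by ring
    omega
  omega

noncomputable def sortVec (n l : ℕ) (x' : Fin l → ℤ) : Fin l → ℤ :=
  fun i => zfull n l x' (i : ℤ)

lemma sortVec_win (hn : 0 < n) (hl : 0 < l) (x' : Fin l → ℤ) : Win n l (sortVec n l x') := by
  constructor
  · intro i i' h
    exact zfull_mono hn hl x' (by exact_mod_cast h)
  · intro j j'
    have h1 : (j : ℤ) ≤ (j' : ℤ) + l * 1 := by
      have := j.isLt
      have := j'.isLt
      omega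
    have := zfull_mono hn hl x' h1
    rw [zfull_shift hn hl] at this
    simpa [sortVec] using this

lemma extS_sortVec (hn : 0 < n) (hl : 0 < l) (x' : Fin l → ℤ) (t : ℤ) :
    extS n l (sortVec n l x') t = zfull n l x' t := by
  obtain ⟨j, m, rfl⟩ := extS_decomp hl t
  rw [extS_eq hl _ j m, zfull_shift hn hl]
  rfl

lemma PhiF_sortVec (hn : 0 < n) (hl : 0 < l) (x' : Fin l → ℤ) :
    PhiF n l (sortVec n l x') = PhiF n l x' := by
  funext w
  have hwin := sortVec_win hn hl x'
  apply le_antisymm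
  · have a1 : extS n l (sortVec n l x') (PhiF n l (sortVec n l x') w) ≤ w :=
      (PhiF_charact hn hl hwin _ w).mp le_rfl
    rw [extS_sortVec hn hl] at a1
    exact (zfull_charact hn hl x' _ w).mp a1
  · have b1 : zfull n l x' (PhiF n l x' w) ≤ w := (zfull_charact hn hl x' _ w).mpr le_rfl
    rw [← extS_sortVec hn hl] at b1
    exact (PhiF_charact hn hl hwin _ w).mpr b1

lemma Rcnt_of_PhiF [NeZero n] (hn : 0 < n) (g : Fin l → ℤ) (w : ℤ) :
    (Rcnt n l g ((w : ZMod n)) : ℤ) = PhiF n l g w - PhiF n l g (w - 1) := by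
  rw [PhiF_count hn g (by omega : w - 1 ≤ w) (by omega)]
  have key : ∀ j : Fin l,
      (if ((((w : ZMod n) - ((g j : ℤ) : ZMod n)).val : ℤ) < w - (w-1)) then (1:ℤ) else 0)
      = if (((g j : ℤ) : ZMod n) = (w : ZMod n)) then (1:ℤ) else 0 := by
    intro j
    congr 1
    simp only [eq_iff_iff]
    have hv : (0:ℤ) ≤ (((w : ZMod n) - ((g j : ℤ) : ZMod n)).val : ℤ) := Int.natCast_nonneg _
    constructor
    · intro h
      have hz : ((w : ZMod n) - ((g j : ℤ) : ZMod n)).val = 0 := by omega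
      have hz2 := (ZMod.val_eq_zero _).mp hz
      exact (sub_eq_zero.mp hz2).symm
    · intro h
      rw [h]
      simp [ZMod.val_eq_zero]
  rw [Finset.sum_congr rfl (fun j _ => key j), Finset.sum_boole]
  norm_cast

lemma Rcnt_sortVec [NeZero n] (hn : 0 < n) (hl : 0 < l) (x' : Fin l → ℤ) (s : ZMod n) :
    Rcnt n l (sortVec n l x') s = Rcnt n l x' s := by
  set w : ℤ := (s.val : ℤ) with hwdef
  have hws : ((w : ZMod n)) = s := by
    rw [hwdef]
    push_cast
    exact ZMod.natCast_rightInverse s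
  have h1 := Rcnt_of_PhiF (l := l) hn (sortVec n l x') w
  have h2 := Rcnt_of_PhiF (l := l) hn x' w
  rw [PhiF_sortVec hn hl] at h1
  rw [hws] at h1 h2
  omega

/-- the sorting step: from a pointwise-bounded rearrangement to a window vector -/
lemma sort_exists [NeZero n] (hn : 0 < n) (hl : 0 < l) {x y x' : Fin l → ℤ}
    (hwx : Win n l x) (hwy : Win n l y)
    (h1 : ∀ j, x j ≤ x' j) (h2 : ∀ j, x' j ≤ y j) (hstrict : ∃ j, x j < x' j) :
    ∃ z : Fin l → ℤ, Win n l z ∧ (∀ j, x j ≤ z j) ∧ (∀ j, z j ≤ y j) ∧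
      (∀ s, Rcnt n l z s = Rcnt n l x' s) ∧ ∃ j, x j < z j := by
  refine ⟨sortVec n l x', sortVec_win hn hl x', ?_, ?_, Rcnt_sortVec hn hl x', ?_⟩
  · -- x ≤ z
    intro i
    by_contra hcon
    push_neg at hcon
    simp only [sortVec] at hcon
    have : zfull n l x' (i:ℤ) ≤ x i - 1 := by omega
    rw [zfull_charact hn hl] at this
    have hb := (PhiF_le_PhiF hn h1 (x i - 1)).trans (PhiF_le hn hwx i) -- PhiF x' (x i - 1) ≤ i - 1
    omega
  · -- z ≤ y
    intro i
    have : (i:ℤ) ≤ PhiF n l x' (y i) :=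
      le_trans (PhiF_ge hn hwy i) (PhiF_le_PhiF hn h2 (y i))
    exact (zfull_charact hn hl x' i (y i)).mpr this
  · -- strictness
    obtain ⟨j₀, hj₀⟩ := hstrict
    set w : ℤ := x j₀ with hwd
    have hPhi : PhiF n l x' w + 1 ≤ PhiF n l x w := by
      unfold PhiF
      have hterm : ∀ j ∈ Finset.univ, (w - x' j) / (n:ℤ) ≤ (w - x j) / n := fun j _ =>
        Int.ediv_le_ediv (by exact_mod_cast hn) (by have := h1 j; omega)
      have hstr : ∃ j ∈ Finset.univ, (w - x' j) / (n:ℤ) < (w - x j) / n := by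
        refine ⟨j₀, Finset.mem_univ _, ?_⟩
        have hlt : (w - x' j₀) / (n:ℤ) < 0 := Int.ediv_neg_of_neg_of_pos (by omega) (by exact_mod_cast hn)
        have heq : (w - x j₀) / (n:ℤ) = 0 := by
          rw [show w - x j₀ = 0 by omega, Int.zero_ediv]
        omega
      have := Finset.sum_lt_sum hterm hstr
      omega
    set i₁ : ℤ := PhiF n l x' w + 1 with hi₁
    have hxle : extS n l x i₁ ≤ w := by
      rw [← PhiF_charact hn hl hwx]
      omega
    have hzgt : ¬ (zfull n l x' i₁ ≤ w) := by
      rw [zfull_charact hn hl]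
      omega
    obtain ⟨j, m, hjm⟩ := extS_decomp hl i₁
    rw [hjm, extS_eq hl x j m] at hxle
    rw [hjm, zfull_shift hn hl] at hzgt
    refine ⟨j, ?_⟩
    simp only [sortVec]
    omega


noncomputable def clsF (hl : 0 < l) (t : ℤ) : Fin l :=
  ⟨(t % (l:ℤ)).toNat, by
    have h0 : (0:ℤ) < l := by exact_mod_cast hl
    have h1 := Int.emod_nonneg t (by positivity : (l:ℤ) ≠ 0)
    have h2 := Int.emod_lt_of_pos t h0
    omega⟩

lemma extS_def (hl : 0 < l) (x : Fin l → ℤ) (t : ℤ) :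
    extS n l x t = x (clsF hl t) + n * (t / l) := by
  rw [extS, dif_pos hl]
  rfl

/-- Claim B: if the arcs cover every residue, a strictly higher rearrangement exists. -/
lemma claimB [NeZero n] (hn : 0 < n) (hl : 0 < l) {x y : Fin l → ℤ}
    (hwx : Win n l x) (hwy : Win n l y) (hxy : ∀ j, x j ≤ y j)
    (hcov : ∀ m : ℤ, ∃ t : ℤ, extS n l x t ≤ m ∧ m < extS n l y t) :
    ∃ z : Fin l → ℤ, Win n l z ∧ (∀ j, x j ≤ z j) ∧ (∀ j, z j ≤ y j) ∧
      (∀ s, Rcnt n l z s = Rcnt n l x s) ∧ ∃ j, x j < z j := by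
  classical
  choose F hF using hcov
  set step : ℤ → ℤ := fun t => F (extS n l x t - 1) with hstepdef
  set T : ℕ → ℤ := fun u => step^[u] 0 with hTdef
  have hTsucc : ∀ u, T (u + 1) = step (T u) := fun u => Function.iterate_succ_apply' step u 0
  have hchain : ∀ u, extS n l x (T (u+1)) ≤ extS n l x (T u) - 1 ∧
      extS n l x (T u) - 1 < extS n l y (T (u+1)) := by
    intro u
    rw [hTsucc u]
    exact hF (extS n l x (T u) - 1)
  -- pigeonhole on classes
  obtain ⟨a, ha, b, hb, hab, hcls⟩ :=
    Finset.exists_ne_map_eq_of_card_lt_of_maps_to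
      (s := Finset.range (l+1)) (t := Finset.univ)
      (by simp [Finset.card_range]) (fun u _ => Finset.mem_univ (clsF hl (T u)))
  have hex : ∃ u, ∃ v, v < u ∧ clsF hl (T v) = clsF hl (T u) := by
    rcases Ne.lt_or_gt hab with h | h
    · exact ⟨b, a, h, hcls⟩
    · exact ⟨a, b, h, hcls.symm⟩
  set s' := Nat.find hex with hs'def
  obtain ⟨s, hss', hclseq⟩ := Nat.find_spec hex
  have hmin : ∀ u, u < s' → ¬ ∃ v, v < u ∧ clsF hl (T v) = clsF hl (T u) :=
    fun u hu => Nat.find_min hex hu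
  have hinj : ∀ u1 u2, u1 < s' → u2 < s' → clsF hl (T u1) = clsF hl (T u2) → u1 = u2 := by
    intro u1 u2 h1 h2 he
    by_contra hne
    rcases Ne.lt_or_gt hne with h | h
    · exact hmin u2 h2 ⟨u1, h, he⟩
    · exact hmin u1 h1 ⟨u2, h, he.symm⟩
  -- witness predicate
  set W : Fin l → Prop := fun c => ∃ u, u ∈ Finset.Icc (s+1) s' ∧ clsF hl (T u) = c with hWdef
  have hWuniq : ∀ c u1 u2, (u1 ∈ Finset.Icc (s+1) s' ∧ clsF hl (T u1) = c) →
      (u2 ∈ Finset.Icc (s+1) s' ∧ clsF hl (T u2) = c) → u1 = u2 := by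
    intro c u1 u2 ⟨hm1, he1⟩ ⟨hm2, he2⟩
    rw [Finset.mem_Icc] at hm1 hm2
    rcases eq_or_lt_of_le hm1.2 with hq1 | hq1 <;> rcases eq_or_lt_of_le hm2.2 with hq2 | hq2
    · omega
    · -- u1 = s', u2 < s'
      exfalso
      have : clsF hl (T u2) = clsF hl (T s) := by rw [he2, ← he1, hq1, ← hclseq]
      have := hinj u2 s hq2 hss' this
      omega
    · exfalso
      have : clsF hl (T u1) = clsF hl (T s) := by rw [he1, ← he2, hq2, ← hclseq]
      have := hinj u1 s hq1 hss' this
      omega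
    · exact hinj u1 u2 hq1 hq2 (he1.trans he2.symm)
  set z0 : Fin l → ℤ := fun c =>
    if h : W c then extS n l x (T (Classical.choose h - 1)) - n * (T (Classical.choose h) / l)
    else x c with hz0def
  set σ : Fin l → Fin l := fun c =>
    if h : W c then clsF hl (T (Classical.choose h - 1)) else c with hσdef
  -- basic facts for witness classes
  have hWfacts : ∀ c (h : W c),
      x c < z0 c ∧ z0 c ≤ y c ∧
      ((z0 c : ℤ) : ZMod n) = ((x (σ c) : ℤ) : ZMod n) := by
    intro c h
    obtain ⟨hmem, hceq⟩ := Classical.choose_spec h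
    set u := Classical.choose h with hudef
    rw [Finset.mem_Icc] at hmem
    have hu1 : 1 ≤ u := by omega
    have hchainu := hchain (u - 1)
    rw [show u - 1 + 1 = u by omega] at hchainu
    have hxc : x c = extS n l x (T u) - n * (T u / l) := by
      rw [← hceq, extS_def hl x (T u)]
      ring
    have hyc : y c = extS n l y (T u) - n * (T u / l) := by
      rw [← hceq, extS_def hl y (T u)]
      ring
    have hz0c : z0 c = extS n l x (T (u - 1)) - n * (T u / l) := by
      rw [hz0def]
      simp only [dif_pos h]
      rfl
    have hσc : σ c = clsF hl (T (u - 1)) := by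
      rw [hσdef]
      simp only [dif_pos h]
      rfl
    refine ⟨by omega, by omega, ?_⟩
    rw [hz0c, hσc, extS_def hl x (T (u-1))]
    push_cast
    ring_nf
    simp
  have hxz0 : ∀ c, x c ≤ z0 c := by
    intro c
    by_cases h : W c
    · exact le_of_lt (hWfacts c h).1
    · rw [hz0def]; simp only [dif_neg h]; exact le_refl _
  have hz0y : ∀ c, z0 c ≤ y c := by
    intro c
    by_cases h : W c
    · exact (hWfacts c h).2.1
    · rw [hz0def]; simp only [dif_neg h]; exact hxy c
  have hstrict : ∃ c, x c < z0 c := by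
    refine ⟨clsF hl (T (s+1)), (hWfacts _ ⟨s+1, ?_, rfl⟩).1⟩
    rw [Finset.mem_Icc]
    omega
  have hres0 : ∀ c, ((z0 c : ℤ) : ZMod n) = ((x (σ c) : ℤ) : ZMod n) := by
    intro c
    by_cases h : W c
    · exact (hWfacts c h).2.2
    · rw [hz0def, hσdef]; simp only [dif_neg h]
  have hσinj : Function.Injective σ := by
    intro c₁ c₂ heq
    by_cases h₁ : W c₁ <;> by_cases h₂ : W c₂
    · obtain ⟨hm1, he1⟩ := Classical.choose_spec h₁
      obtain ⟨hm2, he2⟩ := Classical.choose_spec h₂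
      set u₁ := Classical.choose h₁
      set u₂ := Classical.choose h₂
      rw [hσdef] at heq
      simp only [dif_pos h₁, dif_pos h₂] at heq
      rw [Finset.mem_Icc] at hm1 hm2
      have := hinj (u₁ - 1) (u₂ - 1) (by omega) (by omega) heq
      have : u₁ = u₂ := by omega
      rw [← he1, ← he2, this]
    · exfalso
      obtain ⟨hm1, he1⟩ := Classical.choose_spec h₁
      set u₁ := Classical.choose h₁
      rw [hσdef] at heq
      simp only [dif_pos h₁, dif_neg h₂] at heq
      rw [Finset.mem_Icc] at hm1
      apply h₂
      rcases Nat.lt_or_ge (u₁ - 1) (s + 1) with hc | hc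
      · -- u₁ - 1 = s
        have hu : u₁ - 1 = s := by omega
        refine ⟨s', ?_, ?_⟩
        · rw [Finset.mem_Icc]; omega
        · rw [← heq, hu, hclseq]
      · refine ⟨u₁ - 1, ?_, heq.symm ▸ rfl⟩
        rw [Finset.mem_Icc]
        omega
    · exfalso
      obtain ⟨hm2, he2⟩ := Classical.choose_spec h₂
      set u₂ := Classical.choose h₂
      rw [hσdef] at heq
      simp only [dif_neg h₁, dif_pos h₂] at heq
      rw [Finset.mem_Icc] at hm2
      apply h₁
      rcases Nat.lt_or_ge (u₂ - 1) (s + 1) with hc | hc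
      · have hu : u₂ - 1 = s := by omega
        refine ⟨s', ?_, ?_⟩
        · rw [Finset.mem_Icc]; omega
        · rw [heq, hu, hclseq]
      · refine ⟨u₂ - 1, ?_, heq ▸ rfl⟩
        rw [Finset.mem_Icc]
        omega
    · rw [hσdef] at heq
      simp only [dif_neg h₁, dif_neg h₂] at heq
      exact heq
  have hσsurj : Function.Surjective σ := Finite.surjective_of_injective hσinj
  have hrescnt : ∀ s₀ : ZMod n, Rcnt n l z0 s₀ = Rcnt n l x s₀ := by
    intro s₀
    unfold Rcnt
    rw [Finset.filter_congr (fun c _ => by rw [hres0 c] : ∀ c ∈ Finset.univ,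
      (((z0 c : ℤ) : ZMod n) = s₀) ↔ (((x (σ c) : ℤ) : ZMod n) = s₀))]
    apply Finset.card_bij (fun c _ => σ c)
    · intro c hc
      rw [Finset.mem_filter] at hc ⊢
      exact ⟨Finset.mem_univ _, hc.2⟩
    · intro c₁ h₁ c₂ h₂ he
      exact hσinj he
    · intro c' hc'
      obtain ⟨c, rfl⟩ := hσsurj c'
      rw [Finset.mem_filter] at hc'
      exact ⟨c, Finset.mem_filter.mpr ⟨Finset.mem_univ _, hc'.2⟩, rfl⟩
  -- now sort z0
  obtain ⟨z, hzwin, hxz, hzy, hzres, hzstrict⟩ :=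
    sort_exists hn hl hwx hwy hxz0 hz0y hstrict
  exact ⟨z, hzwin, hxz, hzy, fun s₀ => (hzres s₀).trans (hrescnt s₀), hzstrict⟩

end Core


section Partition

lemma colHt_iff {f : ℕ → ℕ} (hf : IsPartitionF f) {c : ℕ} (hc : 1 ≤ c) (i : ℕ) :
    c ≤ f i ↔ i < colHt f c := by
  obtain ⟨N, hN⟩ := hf.2
  have hanti : Antitone f := antitone_nat_of_succ_le hf.1
  have hne : {i | f i < c}.Nonempty := ⟨N, by
    have := hN N (le_refl N)
    simp only [Set.mem_setOf_eq, this]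
    omega⟩
  set m := sInf {i | f i < c} with hm
  have hmem : f m < c := Nat.sInf_mem hne
  have hiff : ∀ i, c ≤ f i ↔ i < m := by
    intro i
    constructor
    · intro h
      by_contra hcon
      push_neg at hcon
      have := hanti hcon
      omega
    · intro h
      by_contra hcon
      push_neg at hcon
      have := Nat.sInf_le (show i ∈ {i | f i < c} by simp only [Set.mem_setOf_eq]; omega)
      omega
  have hset : {i : ℕ | c ≤ f i} = Set.Iio m := Set.ext fun i => by
    simp only [Set.mem_setOf_eq, Set.mem_Iio, hiff i]
  have hcol : colHt f c = m := by
    rw [colHt]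
    have e1 : {i : ℕ // c ≤ f i} ≃ {i : ℕ // i < m} := Equiv.subtypeEquivRight (fun i => hiff i)
    rw [Nat.card_congr (e1.trans (Fin.equivSubtype (n := m)).symm), Nat.card_eq_fintype_card,
      Fintype.card_fin]
  rw [hcol]
  exact hiff i

lemma colHt_zero {f : ℕ → ℕ} (hf : IsPartitionF f) {c : ℕ} (hc : 1 ≤ c) (h : f 0 < c) :
    colHt f c = 0 := by
  by_contra hcon
  have h0 : 0 < colHt f c := Nat.pos_of_ne_zero hcon
  have := (colHt_iff hf hc 0).mpr h0
  omega

lemma colHt_anti {f : ℕ → ℕ} (hf : IsPartitionF f) {c c' : ℕ} (hc : 1 ≤ c) (hcc : c ≤ c') :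
    colHt f c' ≤ colHt f c := by
  by_contra hcon
  push_neg at hcon
  have h1 : colHt f c < colHt f c' := hcon
  have h2 : c' ≤ f (colHt f c) := (colHt_iff hf (by omega) _).mpr h1
  have h3 : c ≤ f (colHt f c) := by omega
  have := (colHt_iff hf hc _).mp h3
  omega

lemma row_iff_colHt {f g : ℕ → ℕ} (hf : IsPartitionF f) (hg : IsPartitionF g) (δ : ℕ) :
    (∀ i, g (i + δ) ≤ f i) ↔ ∀ c, 1 ≤ c → colHt g c ≤ colHt f c + δ := by
  constructor
  · intro h c hc
    by_contra hcon
    push_neg at hcon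
    set i := colHt g c - δ - 1 with hi
    have h1 : i + δ < colHt g c := by omega
    have h2 : c ≤ g (i + δ) := (colHt_iff hg hc _).mpr h1
    have h3 : c ≤ f i := le_trans h2 (h i)
    have h4 : i < colHt f c := (colHt_iff hf hc _).mp h3
    omega
  · intro h i
    set c := g (i + δ) with hcdef
    rcases Nat.eq_zero_or_pos c with hc | hc
    · omega
    · have h1 : i + δ < colHt g c := (colHt_iff hg hc _).mp (le_refl _)
      have h2 := h c hc
      have h3 : i < colHt f c := by omega
      exact (colHt_iff hf hc _).mpr h3

lemma partition_of_heights (G : ℕ → ℕ) (D : ℕ) (hanti : ∀ c, 1 ≤ c → G (c+1) ≤ G c)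
    (hzero : ∀ c, D < c → G c = 0) :
    ∃ f, IsPartitionF f ∧ ∀ c, 1 ≤ c → colHt f c = G c := by
  have hmono : ∀ c c', 1 ≤ c → c ≤ c' → G c' ≤ G c := by
    intro c c' h1 h2
    induction c', h2 using Nat.le_induction with
    | base => exact le_refl _
    | succ c' hcc ih => exact le_trans (hanti c' (by omega)) ih
  set f : ℕ → ℕ := fun i => ((Finset.Icc 1 D).filter (fun c => i < G c)).card with hfdef
  have hfi : ∀ i, f i = ((Finset.Icc 1 D).filter (fun c => i < G c)).card := fun i => rfl
  have hkey : ∀ i c, 1 ≤ c → (c ≤ f i ↔ i < G c) := by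
    intro i c hc
    constructor
    · intro h
      by_contra hcon
      push_neg at hcon
      have hsub : (Finset.Icc 1 D).filter (fun c' => i < G c') ⊆ Finset.Icc 1 (c - 1) := by
        intro c' hc'
        rw [Finset.mem_filter, Finset.mem_Icc] at hc'
        rw [Finset.mem_Icc]
        refine ⟨hc'.1.1, ?_⟩
        by_contra hcon2
        push_neg at hcon2
        have : G c' ≤ G c := hmono c c' hc (by omega)
        omega
      have := Finset.card_le_card hsub
      rw [Nat.card_Icc, ← hfi i] at this
      omega
    · intro h
      have hcD : c ≤ D := by
        by_contra hcon
        push_neg at hcon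
        have := hzero c hcon
        omega
      have hsub : Finset.Icc 1 c ⊆ (Finset.Icc 1 D).filter (fun c' => i < G c') := by
        intro c' hc'
        rw [Finset.mem_Icc] at hc'
        rw [Finset.mem_filter, Finset.mem_Icc]
        have : G c ≤ G c' := hmono c' c hc'.1 hc'.2
        exact ⟨⟨hc'.1, by omega⟩, by omega⟩
      have := Finset.card_le_card hsub
      rw [Nat.card_Icc, ← hfi i] at this
      omega
  have hpart : IsPartitionF f := by
    constructor
    · intro i
      rw [hfi (i+1), hfi i]
      apply Finset.card_le_card
      intro c hc
      rw [Finset.mem_filter] at hc ⊢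
      exact ⟨hc.1, by omega⟩
    · refine ⟨G 1, fun i hi => ?_⟩
      rcases Nat.eq_zero_or_pos (f i) with h | h
      · exact h
      · exfalso
        have := (hkey i 1 (le_refl 1)).mp h
        omega
  refine ⟨f, hpart, fun c hc => ?_⟩
  have h1 := colHt_iff hpart hc
  rcases Nat.eq_zero_or_pos (G c) with h | h
  · rcases Nat.eq_zero_or_pos (colHt f c) with h2 | h2
    · omega
    · exfalso
      have := (hkey 0 c hc).mp ((h1 0).mpr h2)
      omega
  · have hlt : G c - 1 < colHt f c := (h1 _).mp ((hkey _ c hc).mpr (by omega))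
    rcases Nat.lt_or_ge (colHt f c) (G c + 1) with h2 | h2
    · omega
    · exfalso
      have := (hkey (G c) c hc).mp ((h1 _).mpr (by omega))
      omega

end Partition


section Plumb
variable {n l : ℕ} [NeZero n]

noncomputable def xcol (n : ℕ) {l : ℕ} (v : Fin l → ℕ) (lam : Fin l → ℕ → ℕ) (c : ℕ) :
    Fin l → ℤ := fun j => (v j : ℤ) - (colHt (lam j) c : ℤ)

lemma eFun_eq_Rcnt (v : Fin l → ℕ) (lam : Fin l → ℕ → ℕ) (k : ℕ) (i : ZMod n) :
    eFun n v lam k i = Rcnt n l (xcol n v lam (k+1)) (i - (k : ZMod n)) := by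
  rw [eFun, Nat.card_eq_fintype_card, Fintype.card_subtype, Rcnt]
  congr 1
  apply Finset.filter_congr
  intro j _
  simp only [xcol]
  push_cast
  constructor <;> intro h <;> linear_combination h

lemma eFun_sum (v : Fin l → ℕ) (lam : Fin l → ℕ → ℕ) (k : ℕ) :
    ∑ i : ZMod n, eFun n v lam k i = l := by
  have he : ∀ i, eFun n v lam k i = (Finset.univ.filter
      (fun j : Fin l => (v j : ZMod n) + (k : ZMod n) - (colHt (lam j) (k + 1) : ZMod n) = i)).card := by
    intro i
    rw [eFun, Nat.card_eq_fintype_card, Fintype.card_subtype]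
  rw [Finset.sum_congr rfl (fun i _ => he i),
    ← Finset.card_eq_sum_card_fiberwise (fun j _ => Finset.mem_univ
      ((v j : ZMod n) + (k : ZMod n) - (colHt (lam j) (k + 1) : ZMod n)))]
  simp

lemma stepWt_inj (e e' : ZMod n → ℕ) (hsum : ∑ i, e i = ∑ i, e' i)
    (h : stepWt n e = stepWt n e') : e = e' := by
  set d : ZMod n → ℤ := fun j => (e j : ℤ) - e' j with hd
  have hstep : ∀ j : ZMod n, d (j - 1) = d j := by
    intro j
    have h2 := congrFun h j
    rw [stepWt, stepWt] at h2
    simp only [hd]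
    omega
  have hnat : ∀ m : ℕ, d ((m : ZMod n)) = d 0 := by
    intro m
    induction m with
    | zero => norm_num
    | succ m ih =>
      have h3 := hstep ((m + 1 : ℕ) : ZMod n)
      rw [show ((m + 1 : ℕ) : ZMod n) - 1 = ((m : ℕ) : ZMod n) by push_cast; ring] at h3
      rw [← h3, ih]
  have hall : ∀ j, d j = d 0 := fun j => by
    have h4 := hnat j.val
    rwa [ZMod.natCast_rightInverse j] at h4
  have hsz : ∑ j : ZMod n, d j = 0 := by
    simp only [hd, Finset.sum_sub_distrib]
    have : ((∑ i, e i : ℕ) : ℤ) = ((∑ i, e' i : ℕ) : ℤ) := by exact_mod_cast hsum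
    push_cast at this
    omega
  have hconst : ∑ j : ZMod n, d j = (n : ℤ) * d 0 := by
    rw [Finset.sum_congr rfl (fun j _ => hall j), Finset.sum_const, Finset.card_univ,
      ZMod.card, nsmul_eq_mul]
  have hn : 0 < n := Nat.pos_of_ne_zero (NeZero.ne n)
  have hd0 : d 0 = 0 := by
    rw [hconst] at hsz
    have : (n:ℤ) ≠ 0 := by positivity
    exact (mul_eq_zero.mp hsz).resolve_left this
  funext j
  have h5 := hall j
  rw [hd0] at h5
  simp only [hd] at h5
  omega

lemma eFun_eq_of_pi (v : Fin l → ℕ) {lam mu : Fin l → ℕ → ℕ} {p : ℕ → ZMod n → ℤ}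
    (h1 : IsPi n v lam p) (h2 : IsPi n v mu p) (k : ℕ) :
    eFun n v lam k = eFun n v mu k := by
  have hs : stepWt n (eFun n v lam k) = stepWt n (eFun n v mu k) := (h1.1 k).symm.trans (h2.1 k)
  exact stepWt_inj _ _ (by rw [eFun_sum, eFun_sum]) hs

lemma eFun_ground (v : Fin l → ℕ) {lam : Fin l → ℕ → ℕ} {k : ℕ}
    (h0 : ∀ j, colHt (lam j) (k + 1) = 0) (i : ZMod n) :
    (eFun n v lam k i : ℤ) = wtOf n v (i - (k : ZMod n)) := by
  rw [eFun, Nat.card_eq_fintype_card, Fintype.card_subtype, wtOf]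
  congr 2
  apply Finset.filter_congr
  intro j _
  rw [h0 j]
  push_cast
  constructor <;> intro h <;> linear_combination h

lemma stepWt_ground (v : Fin l → ℕ) {lam : Fin l → ℕ → ℕ} {k : ℕ}
    (h0 : ∀ j, colHt (lam j) (k + 1) = 0) (h0' : ∀ j, colHt (lam j) (k + 2) = 0) (i : ZMod n) :
    stepWt n (eFun n v lam k) i = gsp n (wtOf n v) (k + 1) i - gsp n (wtOf n v) k i := by
  rw [stepWt, eFun_ground v h0 (i - 1), eFun_ground v h0 i, gsp, gsp]
  have e1 : i - ((k + 1 : ℕ) : ZMod n) = i - 1 - (k : ZMod n) := by push_cast; ring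
  rw [e1]

lemma exists_pi (v : Fin l → ℕ) (lam : Fin l → ℕ → ℕ) (hMP : IsMP l lam) :
    ∃ p, IsPi n v lam p := by
  classical
  set K₀ : ℕ := (Finset.univ.sup (fun j : Fin l => lam j 0)) + 1 with hK
  have hzero : ∀ k, K₀ ≤ k → ∀ j, colHt (lam j) (k + 1) = 0 := by
    intro k hk j
    apply colHt_zero (hMP j) (by omega)
    have h6 := Finset.le_sup (f := fun j : Fin l => lam j 0) (Finset.mem_univ j)
    omega
  set p : ℕ → ZMod n → ℤ := fun k i =>
    if K₀ ≤ k then gsp n (wtOf n v) k i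
    else gsp n (wtOf n v) K₀ i - ∑ c ∈ Finset.Ico k K₀, stepWt n (eFun n v lam c) i with hp
  refine ⟨p, fun k => ?_, K₀, fun k hk => ?_⟩
  · funext i
    by_cases h1 : K₀ ≤ k
    · simp only [hp, if_pos h1, if_pos (by omega : K₀ ≤ k + 1)]
      rw [stepWt_ground v (hzero k h1) (hzero (k+1) (by omega))]
    · by_cases h2 : K₀ ≤ k + 1
      · have hkk : K₀ = k + 1 := by omega
        have e1 : p (k+1) i = gsp n (wtOf n v) (k+1) i := by simp only [hp, if_pos h2]
        have e2 : p k i = gsp n (wtOf n v) K₀ i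
            - ∑ c ∈ Finset.Ico k K₀, stepWt n (eFun n v lam c) i := by
          simp only [hp, if_neg h1]
        rw [e1, e2, hkk, show Finset.Ico k (k+1) = {k} from by ext a; rw [Finset.mem_Ico, Finset.mem_singleton]; omega,
          Finset.sum_singleton]
        ring
      · simp only [hp, if_neg h1, if_neg h2]
        rw [Finset.sum_eq_sum_Ico_succ_bot (by omega : k < K₀)
          (fun c => stepWt n (eFun n v lam c) i)]
        ring
  · funext i
    simp only [hp, if_pos hk]

end Plumb


section Bridge
variable {n l : ℕ} [NeZero n]

lemma fin_mono_of_step {w : Fin l → ℤ} (h : ∀ (j : ℕ) (hj : j + 1 < l),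
    w ⟨j, Nat.lt_of_succ_lt hj⟩ ≤ w ⟨j + 1, hj⟩) : Monotone w := by
  have H : ∀ (d a : ℕ) (hb : a + d < l), w ⟨a, by omega⟩ ≤ w ⟨a + d, hb⟩ := by
    intro d
    induction d with
    | zero => intro a hb; exact le_refl _
    | succ d ih =>
      intro a hb
      have h1 := ih a (by omega)
      have h2 := h (a + d) (by omega)
      exact le_trans h1 h2
  intro a b hab
  have hab' : (a : ℕ) ≤ b := hab
  have := H ((b : ℕ) - a) a (by omega)
  have heq : (⟨(a : ℕ) + ((b : ℕ) - a), by omega⟩ : Fin l) = b := by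
    apply Fin.ext
    simp
    omega
  rwa [heq] at this

lemma win_of_cyl {v : Fin l → ℕ} (hv : SortedV n l v)
    {lam : Fin l → ℕ → ℕ} (hMP : IsMP l lam) (hcyl : Cylindrical n v lam)
    {c : ℕ} (hc : 1 ≤ c) (hl : 0 < l) : Win n l (xcol n v lam c) := by
  have hmono : Monotone (xcol n v lam c) := by
    apply fin_mono_of_step
    intro j hj
    have hrow := hcyl.1 j hj
    have hcol := (row_iff_colHt (hMP ⟨j, Nat.lt_of_succ_lt hj⟩) (hMP ⟨j+1, hj⟩) _).mp hrow c hc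
    have hvm : v ⟨j, Nat.lt_of_succ_lt hj⟩ ≤ v ⟨j+1, hj⟩ := hv.1 (by simp [Fin.mk_le_mk])
    simp only [xcol]
    omega
  constructor
  · exact hmono
  · intro j j'
    have h1 : xcol n v lam c j ≤ xcol n v lam c ⟨l - 1, Nat.sub_lt hl Nat.one_pos⟩ :=
      hmono (by simp [Fin.le_def]; omega)
    have h2 : xcol n v lam c ⟨0, hl⟩ ≤ xcol n v lam c j' := hmono (by simp [Fin.le_def])
    have hrow := hcyl.2 hl
    have hcol := (row_iff_colHt (hMP ⟨l - 1, Nat.sub_lt hl Nat.one_pos⟩) (hMP ⟨0, hl⟩) _).mp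
      hrow c hc
    have hvn := hv.2 ⟨l - 1, Nat.sub_lt hl Nat.one_pos⟩
    simp only [xcol] at h1 h2 ⊢
    omega

lemma cyl_of_win {v : Fin l → ℕ} (hv : SortedV n l v) {mu : Fin l → ℕ → ℕ}
    (hMP : IsMP l mu) (hwin : ∀ c, 1 ≤ c → Win n l (xcol n v mu c)) :
    Cylindrical n v mu := by
  constructor
  · intro j hj
    rw [row_iff_colHt (hMP ⟨j, Nat.lt_of_succ_lt hj⟩) (hMP ⟨j+1, hj⟩)]
    intro c hc
    have hstep := (hwin c hc).mono
      (show (⟨j, Nat.lt_of_succ_lt hj⟩ : Fin l) ≤ ⟨j+1, hj⟩ by simp [Fin.mk_le_mk])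
    have hvm : v ⟨j, Nat.lt_of_succ_lt hj⟩ ≤ v ⟨j+1, hj⟩ := hv.1 (by simp [Fin.mk_le_mk])
    simp only [xcol] at hstep
    omega
  · intro hl
    rw [row_iff_colHt (hMP ⟨l - 1, Nat.sub_lt hl Nat.one_pos⟩) (hMP ⟨0, hl⟩)]
    intro c hc
    have hwrap := (hwin c hc).wrap ⟨l - 1, Nat.sub_lt hl Nat.one_pos⟩ ⟨0, hl⟩
    have hvn := hv.2 ⟨l - 1, Nat.sub_lt hl Nat.one_pos⟩
    simp only [xcol] at hwrap
    omega

lemma rowlen_iff {lam : Fin l → ℕ → ℕ} (hMP : IsMP l lam) {k : ℕ} (hk : 1 ≤ k)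
    (j : Fin l) (i : ℕ) :
    lam j i = k ↔ (colHt (lam j) (k + 1) ≤ i ∧ i < colHt (lam j) k) := by
  constructor
  · intro h
    constructor
    · by_contra hcon
      push_neg at hcon
      have := (colHt_iff (hMP j) (by omega) i).mpr hcon
      omega
    · exact (colHt_iff (hMP j) hk i).mp (by omega)
  · rintro ⟨h1, h2⟩
    have ha := (colHt_iff (hMP j) hk i).mpr h2
    have hb : ¬ (k + 1 ≤ lam j i) := by
      intro hcon
      have := (colHt_iff (hMP j) (by omega) i).mp hcon
      omega
    omega

lemma gap_of_rhs {v : Fin l → ℕ} {lam : Fin l → ℕ → ℕ} (hMP : IsMP l lam) {k : ℕ}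
    (hk : 1 ≤ k) {r : ZMod n}
    (hr : ∀ (j : Fin l) (i : ℕ), lam j i = k → colour n v j i k ≠ r) :
    ∀ (j : Fin l) (m : ℤ), ((m : ZMod n) = r - (k : ℕ)) →
      ¬(xcol n v lam k j ≤ m ∧ m < xcol n v lam (k + 1) j) := by
  rintro j m hm ⟨h1, h2⟩
  simp only [xcol] at h1 h2
  have hnn : (0:ℤ) ≤ (v j : ℤ) - 1 - m := by
    have : (0:ℤ) ≤ (colHt (lam j) (k+1) : ℤ) := Int.natCast_nonneg _
    omega
  set i : ℕ := ((v j : ℤ) - 1 - m).toNat with hi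
  have hiz : (i : ℤ) = (v j : ℤ) - 1 - m := Int.toNat_of_nonneg hnn
  have hlen : lam j i = k := by
    rw [rowlen_iff hMP hk j i]
    constructor
    · omega
    · omega
  apply hr j i hlen
  rw [colour]
  have h7 : ((i : ℕ) : ZMod n) = ((v j : ℕ) : ZMod n) - 1 - (m : ZMod n) := by
    have h8 := congrArg (fun z : ℤ => ((z : ZMod n))) hiz
    push_cast at h8
    exact h8
  rw [h7, hm]
  push_cast
  ring

lemma cov_of_not_rhs (hl : 0 < l) {v : Fin l → ℕ} {lam : Fin l → ℕ → ℕ}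
    (hMP : IsMP l lam) {k : ℕ} (hk : 1 ≤ k)
    (h : ∀ r : ZMod n, ∃ j i, lam j i = k ∧ colour n v j i k = r) :
    ∀ m : ℤ, ∃ t : ℤ, extS n l (xcol n v lam k) t ≤ m ∧
      m < extS n l (xcol n v lam (k + 1)) t := by
  intro m
  obtain ⟨j, i, hlen, hcol⟩ := h (((k : ℕ) : ZMod n) + (m : ZMod n))
  obtain ⟨hge, hlt⟩ := (rowlen_iff hMP hk j i).mp hlen
  have hcast : (((v j : ℤ) - 1 - (i : ℕ) : ℤ) : ZMod n) = (m : ZMod n) := by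
    rw [colour] at hcol
    push_cast
    linear_combination hcol
  obtain ⟨e, he⟩ : ∃ e : ℤ, m - ((v j : ℤ) - 1 - (i:ℕ)) = (n : ℤ) * e := by
    have h9 := (ZMod.intCast_eq_intCast_iff _ _ _).mp hcast
    exact h9.dvd
  refine ⟨(j : ℤ) + l * e, ?_, ?_⟩
  · rw [extS_eq hl _ j e]
    simp only [xcol]
    omega
  · rw [extS_eq hl _ j e]
    simp only [xcol]
    omega

end Bridge


/-- a cylindrical multipartition `λ` of highest weight `Λ` is in `𝒴(Λ)` iff
for every `k > 0` some residue `r` does not occur among the colours of the right ends of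
the length-`k` rows of `λ`. -/
theorem highest_lift_characterisation (n : ℕ) [NeZero n] (hn : 2 ≤ n) (l : ℕ)
    (v : Fin l → ℕ) (hv : SortedV n l v) (lam : Fin l → ℕ → ℕ)
    (hMP : IsMP l lam) (hcyl : Cylindrical n v lam) :
    InY n v lam ↔ ∀ k : ℕ, 0 < k → ∃ r : ZMod n,
      ∀ (j : Fin l) (i : ℕ), lam j i = k → colour n v j i k ≠ r := by
  have hn0 : 0 < n := by omega
  rcases Nat.eq_zero_or_pos l with hl0 | hl
  · subst hl0
    constructor
    · intro _ k _
      exact ⟨(0 : ZMod n), fun j => j.elim0⟩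
    · intro _
      obtain ⟨p, hpi⟩ := exists_pi (n := n) v lam hMP
      exact ⟨p, hMP, hcyl, hpi, fun mu _ _ _ j => j.elim0⟩
  constructor
  · -- InY → gap condition (by contradiction)
    intro hInY k hk
    by_contra hcon
    push_neg at hcon
    obtain ⟨p, hHL⟩ := hInY
    have hwx : Win n l (xcol n v lam k) := win_of_cyl hv hMP hcyl hk hl
    have hwy : Win n l (xcol n v lam (k + 1)) := win_of_cyl hv hMP hcyl (by omega) hl
    have hxy : ∀ j, xcol n v lam k j ≤ xcol n v lam (k + 1) j := by
      intro j
      simp only [xcol]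
      have := colHt_anti (hMP j) hk (by omega : k ≤ k + 1)
      omega
    obtain ⟨z, hzwin, hxz, hzy, hzres, j₀, hstrict⟩ :=
      claimB hn0 hl hwx hwy hxy (cov_of_not_rhs hl hMP hk hcon)
    have hzv : ∀ j, z j ≤ (v j : ℤ) := by
      intro j
      have h1 := hzy j
      simp only [xcol] at h1
      have : (0:ℤ) ≤ (colHt (lam j) (k+1) : ℤ) := Int.natCast_nonneg _
      omega
    have hiz : ∀ j, (((v j : ℤ) - z j).toNat : ℤ) = (v j : ℤ) - z j :=
      fun j => Int.toNat_of_nonneg (by have := hzv j; omega)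
    set G : Fin l → ℕ → ℕ :=
      fun j c => if c = k then ((v j : ℤ) - z j).toNat else colHt (lam j) c with hG
    have hmuex : ∀ j : Fin l, ∃ f, IsPartitionF f ∧ ∀ c, 1 ≤ c → colHt f c = G j c := by
      intro j
      apply partition_of_heights (G j) (max (lam j 0) k)
      · intro c hc
        simp only [hG]
        by_cases h1 : c + 1 = k
        · have hck : ¬ (c = k) := by omega
          simp only [if_pos h1, if_neg hck]
          have h2 := hxz j
          simp only [xcol] at h2
          have h3 := colHt_anti (hMP j) hc (by omega : c ≤ k)
          have := hiz j
          omega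
        · by_cases h2 : c = k
          · simp only [if_neg h1, if_pos h2]
            have h4 := hzy j
            simp only [xcol] at h4
            have := hiz j
            have h5 : colHt (lam j) (c+1) = colHt (lam j) (k+1) := by rw [h2]
            omega
          · simp only [if_neg h1, if_neg h2]
            exact colHt_anti (hMP j) hc (by omega)
      · intro c hc
        simp only [hG, if_neg (by omega : ¬ (c = k))]
        exact colHt_zero (hMP j) (by omega) (by omega)
    choose mu hmu1 hmu2 using hmuex
    have hMPmu : IsMP l mu := hmu1
    have hxmu : ∀ c, 1 ≤ c →
        xcol n v mu c = (if c = k then z else xcol n v lam c) := by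
      intro c hc
      funext j
      simp only [xcol]
      rw [hmu2 j c hc]
      simp only [hG]
      by_cases hck : c = k
      · simp only [if_pos hck]
        have := hiz j
        omega
      · simp only [if_neg hck, xcol]
    have hcylmu : Cylindrical n v mu := by
      apply cyl_of_win hv hMPmu
      intro c hc
      rw [hxmu c hc]
      by_cases hck : c = k
      · simp only [if_pos hck]; exact hzwin
      · simp only [if_neg hck]; exact win_of_cyl hv hMP hcyl hc hl
    have hefmu : ∀ c, eFun n v lam c = eFun n v mu c := by
      intro c
      funext i
      rw [eFun_eq_Rcnt, eFun_eq_Rcnt]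
      have hrc : ∀ s, Rcnt n l (xcol n v lam (c+1)) s = Rcnt n l (xcol n v mu (c+1)) s := by
        intro s
        rw [hxmu (c+1) (by omega)]
        by_cases hck : c + 1 = k
        · simp only [if_pos hck]
          rw [← hck] at hzres
          exact (hzres s).symm
        · simp only [if_neg hck]
      rw [hrc]
    have hpim : IsPi n v mu p := by
      obtain ⟨hsteps, K, hKK⟩ := hHL.2.2.1
      exact ⟨fun c => (hsteps c).trans (congrArg (stepWt n) (hefmu c)), K, hKK⟩
    have hH := hHL.2.2.2 mu hMPmu hcylmu hpim
    have h10 := hH j₀ k hk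
    rw [hmu2 j₀ k hk] at h10
    simp only [hG, if_pos rfl] at h10
    simp only [xcol] at hstrict
    have := hiz j₀
    omega
  · -- gap condition → InY
    intro hrhs
    obtain ⟨p, hpi⟩ := exists_pi (n := n) v lam hMP
    refine ⟨p, hMP, hcyl, hpi, ?_⟩
    intro mu hMPmu hcylmu hpimu
    have hef : ∀ c, eFun n v lam c = eFun n v mu c := fun c => eFun_eq_of_pi v hpi hpimu c
    have hres : ∀ c, 1 ≤ c → ∀ s,
        Rcnt n l (xcol n v lam c) s = Rcnt n l (xcol n v mu c) s := by
      intro c hc s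
      obtain ⟨c', rfl⟩ : ∃ c', c = c' + 1 := ⟨c - 1, by omega⟩
      have h := congrFun (hef c') (s + ((c' : ℕ) : ZMod n))
      rw [eFun_eq_Rcnt, eFun_eq_Rcnt, add_sub_cancel_right] at h
      exact h
    set K₁ : ℕ := (Finset.univ.sup (fun j : Fin l => max (lam j 0) (mu j 0))) + 1 with hK₁
    have hbase : ∀ c, K₁ ≤ c → ∀ j, xcol n v mu c j ≤ xcol n v lam c j := by
      intro c hc j
      have hsup := Finset.le_sup (f := fun j : Fin l => max (lam j 0) (mu j 0))
        (Finset.mem_univ j)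
      have h1 : colHt (lam j) c = 0 := colHt_zero (hMP j) (by omega) (by omega)
      have h2 : colHt (mu j) c = 0 := colHt_zero (hMPmu j) (by omega) (by omega)
      simp only [xcol, h1, h2]
      omega
    have hstep : ∀ c, 1 ≤ c → (∀ j, xcol n v mu (c+1) j ≤ xcol n v lam (c+1) j) →
        (∀ j, xcol n v mu c j ≤ xcol n v lam c j) := by
      intro c hc ih
      have hxy : ∀ j, xcol n v lam c j ≤ xcol n v lam (c+1) j := by
        intro j
        simp only [xcol]
        have := colHt_anti (hMP j) hc (by omega : c ≤ c + 1)
        omega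
      have hx'y : ∀ j, xcol n v mu c j ≤ xcol n v lam (c+1) j := by
        intro j
        have h1 : xcol n v mu c j ≤ xcol n v mu (c+1) j := by
          simp only [xcol]
          have := colHt_anti (hMPmu j) hc (by omega : c ≤ c + 1)
          omega
        exact h1.trans (ih j)
      obtain ⟨r, hr⟩ := hrhs c (by omega)
      exact claimA hn0 hl (win_of_cyl hv hMP hcyl hc hl) (win_of_cyl hv hMPmu hcylmu hc hl)
        hxy hx'y (hres c hc) ⟨r - ((c : ℕ) : ZMod n), gap_of_rhs hMP hc hr⟩
    have main : ∀ d c, 1 ≤ c → K₁ ≤ c + d → ∀ j, xcol n v mu c j ≤ xcol n v lam c j := by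
      intro d
      induction d with
      | zero => intro c hc hKc; exact hbase c (by omega)
      | succ d ih =>
        intro c hc hKc
        rcases le_or_gt K₁ c with h | h
        · exact hbase c h
        · exact hstep c hc (ih (c+1) (by omega) (by omega))
    intro j k hk
    have h11 := main K₁ k hk (by omega) j
    simp only [xcol] at h11
    omega

end BF
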